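/- arXiv:2304.01859 — 2 statements merged into one kernel-verified Lean document; each statement's English description precedes it below -/
import Mathlib

section
/- Let (A,B,C,D) be a discrete-time LTI system with state dimension n, input dimension m, output dimension p, and let Π ∈ ℝ^{(m+p)×(m+p)} be symmetric. Define the finite-horizon impulse-response matrix 𝒯_L ∈ ℝ^{Lp×Lm} as the lower block-triangular matrix with block entry D on the block diagonal, block entry C·A^{i−j−1}·B in block row i and block column j for i > j, and zero blocks above the diagonal. Then the system is L-dissipative with respect to Π if and only if the matrix [I_{Lm}; 𝒯_L]ᵀ Π_L [I_{Lm}; 𝒯_L] is positive semidefinite. -/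
open Matrix

/-- Finite-horizon impulse-response (block lower-triangular Toeplitz) matrix `𝒯_L`:
block `D` on the diagonal, block `C A^(i-j-1) B` below the diagonal, zero above. -/
noncomputable def impRespMat {n m p : ℕ} (A : Matrix (Fin n) (Fin n) ℝ)
    (B : Matrix (Fin n) (Fin m) ℝ) (C : Matrix (Fin p) (Fin n) ℝ)
    (D : Matrix (Fin p) (Fin m) ℝ) (L : ℕ) :
    Matrix (Fin L × Fin p) (Fin L × Fin m) ℝ :=
  fun r c =>
    if (r.1 : ℕ) = (c.1 : ℕ) then D r.2 c.2
    else if (c.1 : ℕ) < (r.1 : ℕ) then (C * A ^ ((r.1 : ℕ) - (c.1 : ℕ) - 1) * B) r.2 c.2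
    else 0

/-- `Π_L = [[I_L ⊗ Q, I_L ⊗ S], [I_L ⊗ Sᵀ, I_L ⊗ R]]` for `Π = [[Q, S], [Sᵀ, R]]`,
acting on stacked input-output vectors. -/
def kronPi {m p L : ℕ} (P : Matrix (Fin m ⊕ Fin p) (Fin m ⊕ Fin p) ℝ) :
    Matrix ((Fin L × Fin m) ⊕ (Fin L × Fin p)) ((Fin L × Fin m) ⊕ (Fin L × Fin p)) ℝ :=
  fun r c =>
    if Sum.elim Prod.fst Prod.fst r = Sum.elim Prod.fst Prod.fst c then
      P (Sum.map Prod.snd Prod.snd r) (Sum.map Prod.snd Prod.snd c)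
    else 0

/-- The system `(A, B, C, D)` is `L`-dissipative with respect to the supply rate `Π`:
every length-`L` trajectory with zero initial state has nonnegative total supply. -/
def LDissipative {n m p : ℕ} (A : Matrix (Fin n) (Fin n) ℝ) (B : Matrix (Fin n) (Fin m) ℝ)
    (C : Matrix (Fin p) (Fin n) ℝ) (D : Matrix (Fin p) (Fin m) ℝ) (L : ℕ)
    (P : Matrix (Fin m ⊕ Fin p) (Fin m ⊕ Fin p) ℝ) : Prop :=
  ∀ (u : Fin L → Fin m → ℝ) (y : Fin L → Fin p → ℝ) (x : Fin (L + 1) → Fin n → ℝ),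
    x 0 = 0 →
    (∀ k : Fin L,
      x k.succ = A.mulVec (x k.castSucc) + B.mulVec (u k) ∧
      y k = C.mulVec (x k.castSucc) + D.mulVec (u k)) →
    0 ≤ ∑ k : Fin L, Sum.elim (u k) (y k) ⬝ᵥ P.mulVec (Sum.elim (u k) (y k))

/-!
With zero initial state the state is the convolution `x k = ∑_{j<k} A^(k-j-1) B u j`, so every
input `u` drives exactly one trajectory, and its stacked output is `𝒯_L u`. Up to reordering the
coordinates, `Π_L` is `I_L ⊗ Π`, so the supply of that trajectory is the quadratic form of
`[I; 𝒯_L]ᵀ Π_L [I; 𝒯_L]` at the stacked input. Symmetry of `Π` makes this matrix symmetric, and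
then positive semidefiniteness is exactly nonnegativity of the form.
-/

open Finset
open scoped Kronecker

namespace Matrix

theorem posSemidef_conjTranspose_mul_mul_iff {ι κ R : Type*} [Fintype ι] [Fintype κ]
    [CommRing R] [PartialOrder R] [StarRing R] {M : Matrix ι ι R} (hM : M.IsHermitian)
    (N : Matrix ι κ R) :
    (Nᴴ * M * N).PosSemidef ↔ ∀ x, 0 ≤ star (N *ᵥ x) ⬝ᵥ M *ᵥ (N *ᵥ x) := by
  simp only [posSemidef_iff_dotProduct_mulVec, isHermitian_conjTranspose_mul_mul N hM, true_and,
    star_mulVec, dotProduct_mulVec, vecMul_vecMul, ← mulVec_mulVec]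

theorem mulVec_uncurry {ι κ α β R : Type*} [Fintype κ] [Fintype β]
    [NonUnitalNonAssocSemiring R] (M : Matrix (ι × α) (κ × β) R) (u : κ → β → R) (k : ι) (i : α) :
    (M *ᵥ Function.uncurry u) (k, i) = ∑ j, (M.submatrix (Prod.mk k) (Prod.mk j) *ᵥ u j) i := by
  simp only [mulVec, dotProduct, Fintype.sum_prod_type, submatrix_apply,
    Function.uncurry_apply_pair]

theorem one_kronecker_mulVec_uncurry {ι α R : Type*} [Fintype ι] [DecidableEq ι] [Fintype α]
    [NonAssocSemiring R] (P : Matrix α α R) (w : ι → α → R) :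
    ((1 : Matrix ι ι R) ⊗ₖ P) *ᵥ Function.uncurry w = Function.uncurry fun k => P *ᵥ w k := by
  ext ⟨k, i⟩
  simp only [mulVec, dotProduct, Fintype.sum_prod_type, Function.uncurry_apply_pair,
    kroneckerMap_apply, one_apply, ite_mul, one_mul, zero_mul]
  rw [Finset.sum_comm]
  simp

theorem uncurry_dotProduct_uncurry {ι α R : Type*} [Fintype ι] [Fintype α]
    [NonUnitalNonAssocSemiring R] (v w : ι → α → R) :
    Function.uncurry v ⬝ᵥ Function.uncurry w = ∑ k, v k ⬝ᵥ w k :=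
  Fintype.sum_prod_type _

end Matrix

section ZeroStateResponse

variable {n m p L : ℕ} (A : Matrix (Fin n) (Fin n) ℝ) (B : Matrix (Fin n) (Fin m) ℝ)
  (C : Matrix (Fin p) (Fin n) ℝ) (D : Matrix (Fin p) (Fin m) ℝ) (u : Fin L → Fin m → ℝ)

def forcedState (k : ℕ) : Fin n → ℝ :=
  ∑ j ∈ {j : Fin L | (j : ℕ) < k}, (A ^ (k - j - 1) * B) *ᵥ u j

def forcedOutput (k : Fin L) : Fin p → ℝ :=
  C *ᵥ forcedState A B u k + D *ᵥ u k

theorem forcedState_zero : forcedState A B u 0 = 0 := by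
  simp [forcedState]

theorem forcedState_succ (k : Fin L) :
    forcedState A B u (k + 1) = A *ᵥ forcedState A B u k + B *ᵥ u k := by
  rw [← Fintype.sum_ite_eq' k (fun j => B *ᵥ u j)]
  simp only [forcedState, sum_filter, mulVec_sum, ← sum_add_distrib]
  refine sum_congr rfl fun j _ => ?_
  rcases lt_trichotomy j k with h | rfl | h
  · have h' : (j : ℕ) < k := h
    rw [if_pos (by omega), if_pos h', if_neg h.ne, add_zero, mulVec_mulVec, ← Matrix.mul_assoc,
      ← pow_succ', show k - j - 1 + 1 = (k + 1 : ℕ) - j - 1 by omega]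
  · simp
  · have h' : (k : ℕ) < j := h
    rw [if_neg (by omega), if_neg (by omega), if_neg h.ne', mulVec_zero, add_zero]

variable {A B u} in
theorem eq_forcedState_of_trajectory {x : Fin (L + 1) → Fin n → ℝ} (h0 : x 0 = 0)
    (hx : ∀ k : Fin L, x k.succ = A *ᵥ x k.castSucc + B *ᵥ u k) (k : Fin (L + 1)) :
    x k = forcedState A B u k := by
  induction k using Fin.induction with
  | zero => rw [h0, Fin.val_zero, forcedState_zero]
  | succ k ih => rw [hx, ih, Fin.val_succ, forcedState_succ, Fin.val_castSucc]

theorem impRespMat_submatrix (k j : Fin L) :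
    (impRespMat A B C D L).submatrix (Prod.mk k) (Prod.mk j) =
      if j = k then D else if j < k then C * A ^ ((k : ℕ) - j - 1) * B else 0 := by
  ext i l
  simp only [submatrix_apply, impRespMat, Fin.val_inj, Fin.lt_def, eq_comm (a := j)]
  split_ifs <;> rfl

theorem sum_impRespMat_submatrix_mulVec (k : Fin L) :
    ∑ j, (impRespMat A B C D L).submatrix (Prod.mk k) (Prod.mk j) *ᵥ u j =
      forcedOutput A B C D u k := by
  rw [forcedOutput, forcedState, mulVec_sum, ← Fintype.sum_ite_eq' k (fun j => D *ᵥ u j),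
    sum_filter, ← sum_add_distrib]
  refine sum_congr rfl fun j _ => ?_
  rw [impRespMat_submatrix]
  rcases lt_trichotomy j k with h | rfl | h
  · rw [if_neg h.ne, if_pos h, if_pos (show (j : ℕ) < k from h), if_neg h.ne, add_zero,
      mulVec_mulVec, Matrix.mul_assoc]
  · simp
  · rw [if_neg h.ne', if_neg (not_lt.2 h.le), if_neg (show ¬ (j : ℕ) < k from not_lt.2 h.le),
      if_neg h.ne', zero_mulVec, add_zero]

theorem impRespMat_mulVec_uncurry :
    impRespMat A B C D L *ᵥ Function.uncurry u = Function.uncurry (forcedOutput A B C D u) := by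
  ext ⟨k, i⟩
  rw [mulVec_uncurry, ← Finset.sum_apply, sum_impRespMat_submatrix_mulVec]
  rfl

theorem lDissipative_iff_forall_forcedOutput (P : Matrix (Fin m ⊕ Fin p) (Fin m ⊕ Fin p) ℝ) :
    LDissipative A B C D L P ↔ ∀ u : Fin L → Fin m → ℝ,
      0 ≤ ∑ k, Sum.elim (u k) (forcedOutput A B C D u k) ⬝ᵥ
        P *ᵥ Sum.elim (u k) (forcedOutput A B C D u k) := by
  refine ⟨fun h u => h u _ (fun k => forcedState A B u k) (forcedState_zero A B u) fun k =>
    ⟨forcedState_succ A B u k, rfl⟩, fun h u y x h0 hxy => ?_⟩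
  obtain rfl : y = forcedOutput A B C D u := funext fun k => by
    rw [(hxy k).2, eq_forcedState_of_trajectory h0 (fun k => (hxy k).1), forcedOutput,
      Fin.val_castSucc]
  exact h u

end ZeroStateResponse

section SupplyRate

variable {m p L : ℕ}

theorem kronPi_eq_submatrix (P : Matrix (Fin m ⊕ Fin p) (Fin m ⊕ Fin p) ℝ) :
    kronPi (L := L) P =
      ((1 : Matrix (Fin L) (Fin L) ℝ) ⊗ₖ P).submatrix (Equiv.prodSumDistrib _ _ _).symm
        (Equiv.prodSumDistrib _ _ _).symm := by
  ext (⟨k, i⟩ | ⟨k, i⟩) (⟨j, l⟩ | ⟨j, l⟩) <;> simp [kronPi, one_apply, ite_mul] <;> rfl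

theorem kronPi_isSymm {P : Matrix (Fin m ⊕ Fin p) (Fin m ⊕ Fin p) ℝ} (hP : P.IsSymm) :
    (kronPi (L := L) P).IsSymm := by
  rw [kronPi_eq_submatrix]
  refine IsSymm.submatrix ?_ _
  rw [IsSymm, ← kroneckerMap_transpose, transpose_one, hP.eq]

theorem sumElim_uncurry_dotProduct_kronPi_mulVec (P : Matrix (Fin m ⊕ Fin p) (Fin m ⊕ Fin p) ℝ)
    (u : Fin L → Fin m → ℝ) (y : Fin L → Fin p → ℝ) :
    Sum.elim (Function.uncurry u) (Function.uncurry y) ⬝ᵥ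
        kronPi P *ᵥ Sum.elim (Function.uncurry u) (Function.uncurry y) =
      ∑ k, Sum.elim (u k) (y k) ⬝ᵥ P *ᵥ Sum.elim (u k) (y k) := by
  have hstack : Sum.elim (Function.uncurry u) (Function.uncurry y) ∘ Equiv.prodSumDistrib _ _ _ =
      Function.uncurry fun k => Sum.elim (u k) (y k) := by
    ext ⟨k, i | i⟩ <;> rfl
  rw [kronPi_eq_submatrix, submatrix_mulVec_equiv, Equiv.symm_symm, dotProduct_comp_equiv_symm,
    hstack, one_kronecker_mulVec_uncurry, uncurry_dotProduct_uncurry]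

end SupplyRate

/-- **Model-based `L`-dissipativity test.** The LTI system `(A, B, C, D)` is
`L`-dissipative with respect to the symmetric supply rate `Π` if and only if
`[I; 𝒯_L]ᵀ Π_L [I; 𝒯_L] ⪰ 0`. -/
theorem lDissipative_iff_posSemidef {n m p L : ℕ}
    (A : Matrix (Fin n) (Fin n) ℝ) (B : Matrix (Fin n) (Fin m) ℝ)
    (C : Matrix (Fin p) (Fin n) ℝ) (D : Matrix (Fin p) (Fin m) ℝ)
    (P : Matrix (Fin m ⊕ Fin p) (Fin m ⊕ Fin p) ℝ) (hP : P.IsSymm) :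
    LDissipative A B C D L P ↔
      ((fromRows (1 : Matrix (Fin L × Fin m) (Fin L × Fin m) ℝ) (impRespMat A B C D L))ᵀ *
          kronPi (L := L) P *
          fromRows (1 : Matrix (Fin L × Fin m) (Fin L × Fin m) ℝ)
            (impRespMat A B C D L)).PosSemidef := by
  rw [lDissipative_iff_forall_forcedOutput, ← conjTranspose_eq_transpose_of_trivial,
    posSemidef_conjTranspose_mul_mul_iff (isHermitian_iff_isSymm.2 (kronPi_isSymm hP)),
    ← (Equiv.curry (Fin L) (Fin m) ℝ).symm.forall_congr_right]
  simp only [Equiv.curry_symm_apply, fromRows_mulVec, one_mulVec, impRespMat_mulVec_uncurry,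
    star_trivial, sumElim_uncurry_dotProduct_kronPi_mulVec]
end

section
/- Let (A,B,C,D) be a discrete-time LTI system with state dimension n, input dimension m, output dimension p, and let (u^d, y^d) be a length-N trajectory of the system with 1 ≤ L ≤ N. Assume the depth-L observability matrix [C; CA; …; CA^{L−1}] has rank n. Then the column span of the stacked Hankel matrix [𝓗_L(u^d); 𝓗_L(y^d)] equals the finite-horizon behavior B|_L of the system if and only if rank [𝓗_L(u^d); 𝓗_L(y^d)] = m·L + n. -/
open Matrix

/-- Block Hankel matrix with depth `L` of a sequence `z(0),…,z(N-1)` of vectors in `ℝ^q`. -/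
noncomputable def blockHankel {N q : ℕ} (L : ℕ) (hLN : L ≤ N)
    (z : Fin N → Fin q → ℝ) : Matrix (Fin L × Fin q) (Fin (N - L + 1)) ℝ :=
  fun r j => z ⟨r.1.val + j.val, by have h1 := r.1.isLt; have h2 := j.isLt; omega⟩ r.2

/-- `(u, y)` is a length-`L` trajectory of the LTI system `(A, B, C, D)`. -/
def IsTrajectory {n m p : ℕ} (A : Matrix (Fin n) (Fin n) ℝ) (B : Matrix (Fin n) (Fin m) ℝ)
    (C : Matrix (Fin p) (Fin n) ℝ) (D : Matrix (Fin p) (Fin m) ℝ) (L : ℕ)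
    (u : Fin L → Fin m → ℝ) (y : Fin L → Fin p → ℝ) : Prop :=
  ∃ x : Fin (L + 1) → Fin n → ℝ,
    ∀ k : Fin L,
      x k.succ = A.mulVec (x k.castSucc) + B.mulVec (u k) ∧
      y k = C.mulVec (x k.castSucc) + D.mulVec (u k)

/-- Finite-horizon observability matrix `[C; CA; …; CA^{L-1}]` of depth `L`. -/
noncomputable def obsMat {n p : ℕ} (A : Matrix (Fin n) (Fin n) ℝ)
    (C : Matrix (Fin p) (Fin n) ℝ) (L : ℕ) : Matrix (Fin L × Fin p) (Fin n) ℝ :=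
  fun r j => (C * A ^ (r.1 : ℕ)) r.2 j

noncomputable def stSeq {n m : ℕ} (A : Matrix (Fin n) (Fin n) ℝ) (B : Matrix (Fin n) (Fin m) ℝ)
    (x0 : Fin n → ℝ) (u : ℕ → Fin m → ℝ) : ℕ → Fin n → ℝ
  | 0 => x0
  | k + 1 => A.mulVec (stSeq A B x0 u k) + B.mulVec (u k)

noncomputable def extFin {L m : ℕ} (u : Fin L → Fin m → ℝ) : ℕ → Fin m → ℝ :=
  fun k => if h : k < L then u ⟨k, h⟩ else 0

noncomputable def trajOut {n m p : ℕ} (A : Matrix (Fin n) (Fin n) ℝ) (B : Matrix (Fin n) (Fin m) ℝ)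
    (C : Matrix (Fin p) (Fin n) ℝ) (D : Matrix (Fin p) (Fin m) ℝ) (L : ℕ)
    (x0 : Fin n → ℝ) (u : Fin L × Fin m → ℝ) : Fin L × Fin p → ℝ :=
  fun kp => (C.mulVec (stSeq A B x0 (extFin fun k a => u (k, a)) kp.1.val)
    + D.mulVec (fun a => u (kp.1, a))) kp.2

lemma isTrajectory_iff {n m p L : ℕ} (A : Matrix (Fin n) (Fin n) ℝ) (B : Matrix (Fin n) (Fin m) ℝ)
    (C : Matrix (Fin p) (Fin n) ℝ) (D : Matrix (Fin p) (Fin m) ℝ)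
    (u : Fin L × Fin m → ℝ) (y : Fin L × Fin p → ℝ) :
    IsTrajectory A B C D L (fun k a => u (k, a)) (fun k a => y (k, a)) ↔
      ∃ x0, y = trajOut A B C D L x0 u := by
  constructor
  · rintro ⟨x, hx⟩
    refine ⟨x 0, ?_⟩
    have key : ∀ (k : ℕ) (hk : k ≤ L),
        x ⟨k, by omega⟩ = stSeq A B (x 0) (extFin fun k a => u (k, a)) k := by
      intro k
      induction k with
      | zero => intro _; congr 1
      | succ k ih =>
        intro hk
        have hkL : k < L := by omega
        have h1 := (hx ⟨k, hkL⟩).1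
        have hsucc : (⟨k, hkL⟩ : Fin L).succ = ⟨k + 1, by omega⟩ := rfl
        have hcast : (⟨k, hkL⟩ : Fin L).castSucc = ⟨k, by omega⟩ := rfl
        rw [hsucc, hcast] at h1
        rw [h1, ih (by omega)]
        show _ = A.mulVec _ + B.mulVec (extFin (fun k a => u (k, a)) k)
        rw [extFin, dif_pos hkL]
    funext kp
    have h2 := (hx kp.1).2
    have hcast : (kp.1).castSucc = ⟨kp.1.val, by omega⟩ := rfl
    rw [hcast, key kp.1.val (le_of_lt kp.1.isLt)] at h2
    have : y kp = y (kp.1, kp.2) := by rw [Prod.mk.eta]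
    rw [this]
    exact congrFun h2 kp.2
  · rintro ⟨x0, hy⟩
    refine ⟨fun k => stSeq A B x0 (extFin fun k a => u (k, a)) k.val, fun k => ?_⟩
    constructor
    · show stSeq A B x0 _ (k.val + 1) = _
      show A.mulVec _ + B.mulVec (extFin (fun k a => u (k, a)) k.val) = _
      rw [extFin, dif_pos k.isLt]
      congr
    · rw [hy]
      funext a
      rfl

lemma stSeq_add {n m : ℕ} (A : Matrix (Fin n) (Fin n) ℝ) (B : Matrix (Fin n) (Fin m) ℝ)
    (x0 x0' : Fin n → ℝ) (u u' : ℕ → Fin m → ℝ) (k : ℕ) :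
    stSeq A B (x0 + x0') (fun i => u i + u' i) k = stSeq A B x0 u k + stSeq A B x0' u' k := by
  induction k with
  | zero => rfl
  | succ k ih =>
    show A.mulVec _ + B.mulVec _ = _
    rw [ih, Matrix.mulVec_add, Matrix.mulVec_add]
    show _ = A.mulVec _ + B.mulVec _ + (A.mulVec _ + B.mulVec _)
    abel

lemma stSeq_smul {n m : ℕ} (A : Matrix (Fin n) (Fin n) ℝ) (B : Matrix (Fin n) (Fin m) ℝ)
    (c : ℝ) (x0 : Fin n → ℝ) (u : ℕ → Fin m → ℝ) (k : ℕ) :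
    stSeq A B (c • x0) (fun i => c • u i) k = c • stSeq A B x0 u k := by
  induction k with
  | zero => rfl
  | succ k ih =>
    show A.mulVec _ + B.mulVec _ = _
    rw [ih, Matrix.mulVec_smul, Matrix.mulVec_smul]
    show _ = c • (A.mulVec _ + B.mulVec _)
    rw [smul_add]

lemma stSeq_zero_input {n m : ℕ} (A : Matrix (Fin n) (Fin n) ℝ) (B : Matrix (Fin n) (Fin m) ℝ)
    (x0 : Fin n → ℝ) (u : ℕ → Fin m → ℝ) (hu : ∀ i, u i = 0) (k : ℕ) :
    stSeq A B x0 u k = (A ^ k).mulVec x0 := by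
  induction k with
  | zero =>
    show x0 = (A ^ 0).mulVec x0
    rw [pow_zero, Matrix.one_mulVec]
  | succ k ih =>
    show A.mulVec _ + B.mulVec _ = _
    rw [ih, hu, Matrix.mulVec_zero, add_zero, Matrix.mulVec_mulVec, ← pow_succ']

noncomputable def trajMap {n m p : ℕ} (A : Matrix (Fin n) (Fin n) ℝ) (B : Matrix (Fin n) (Fin m) ℝ)
    (C : Matrix (Fin p) (Fin n) ℝ) (D : Matrix (Fin p) (Fin m) ℝ) (L : ℕ) :
    ((Fin n → ℝ) × (Fin L × Fin m → ℝ)) →ₗ[ℝ] ((Fin L × Fin m ⊕ Fin L × Fin p) → ℝ) where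
  toFun z := Sum.elim z.2 (trajOut A B C D L z.1 z.2)
  map_add' z z' := by
    funext r
    cases r with
    | inl r => rfl
    | inr r =>
      show trajOut A B C D L (z.1 + z'.1) (z.2 + z'.2) r = _
      unfold trajOut
      have hst : stSeq A B (z.1 + z'.1) (extFin fun k a => (z.2 + z'.2) (k, a)) r.1.val
          = stSeq A B z.1 (extFin fun k a => z.2 (k, a)) r.1.val
            + stSeq A B z'.1 (extFin fun k a => z'.2 (k, a)) r.1.val := by
        have harg : (extFin fun k a => (z.2 + z'.2) (k, a))
            = fun i => extFin (fun k a => z.2 (k, a)) i + extFin (fun k a => z'.2 (k, a)) i := by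
          funext i a
          by_cases h : i < L <;> simp [extFin, h]
        rw [harg, stSeq_add]
      rw [hst]
      have hD : (fun a => (z.2 + z'.2) (r.1, a))
          = (fun a => z.2 (r.1, a)) + (fun a => z'.2 (r.1, a)) := rfl
      rw [hD, Matrix.mulVec_add, Matrix.mulVec_add]
      show _ = (C.mulVec _ + D.mulVec _) r.2 + (C.mulVec _ + D.mulVec _) r.2
      simp only [Pi.add_apply]
      ring
  map_smul' c z := by
    funext r
    cases r with
    | inl r => rfl
    | inr r =>
      show trajOut A B C D L (c • z.1) (c • z.2) r = _
      unfold trajOut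
      have hst : stSeq A B (c • z.1) (extFin fun k a => (c • z.2) (k, a)) r.1.val
          = c • stSeq A B z.1 (extFin fun k a => z.2 (k, a)) r.1.val := by
        have harg : (extFin fun k a => (c • z.2) (k, a))
            = fun i => c • extFin (fun k a => z.2 (k, a)) i := by
          funext i a
          by_cases h : i < L <;> simp [extFin, h]
        rw [harg, stSeq_smul]
      rw [hst]
      have hD : (fun a => (c • z.2) (r.1, a)) = c • (fun a => z.2 (r.1, a)) := rfl
      rw [hD, Matrix.mulVec_smul, Matrix.mulVec_smul]
      show _ = (c • ((C.mulVec _ + D.mulVec _) r.2) : ℝ)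
      simp only [Pi.add_apply, Pi.smul_apply, smul_eq_mul]
      ring

lemma mem_range_trajMap {n m p L : ℕ} (A : Matrix (Fin n) (Fin n) ℝ) (B : Matrix (Fin n) (Fin m) ℝ)
    (C : Matrix (Fin p) (Fin n) ℝ) (D : Matrix (Fin p) (Fin m) ℝ)
    (w : (Fin L × Fin m ⊕ Fin L × Fin p) → ℝ) :
    w ∈ LinearMap.range (trajMap A B C D L) ↔
      IsTrajectory A B C D L (fun k a => w (Sum.inl (k, a))) (fun k a => w (Sum.inr (k, a))) := by
  constructor
  · rintro ⟨⟨x0, U⟩, rfl⟩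
    exact (isTrajectory_iff A B C D U (trajOut A B C D L x0 U)).mpr ⟨x0, rfl⟩
  · intro h
    obtain ⟨x0, hy⟩ := (isTrajectory_iff A B C D (fun km => w (Sum.inl km))
      (fun kp => w (Sum.inr kp))).mp h
    refine ⟨(x0, fun km => w (Sum.inl km)), ?_⟩
    funext r
    cases r with
    | inl r => rfl
    | inr r => exact (congrFun hy r).symm

lemma trajMap_inj {n m p L : ℕ} (A : Matrix (Fin n) (Fin n) ℝ) (B : Matrix (Fin n) (Fin m) ℝ)
    (C : Matrix (Fin p) (Fin n) ℝ) (D : Matrix (Fin p) (Fin m) ℝ)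
    (hobs : (obsMat A C L).rank = n) :
    Function.Injective (trajMap A B C D L) := by
  have hker : LinearMap.ker (obsMat A C L).mulVecLin = ⊥ := by
    have h1 := LinearMap.finrank_range_add_finrank_ker (obsMat A C L).mulVecLin
    have h2 : Module.finrank ℝ (Fin n → ℝ) = n := by simp
    rw [h2] at h1
    have h3 : Module.finrank ℝ (LinearMap.range (obsMat A C L).mulVecLin) = n := hobs
    have h4 : Module.finrank ℝ (LinearMap.ker (obsMat A C L).mulVecLin) = 0 := by omega
    exact Submodule.finrank_eq_zero.mp h4
  rw [← LinearMap.ker_eq_bot, Submodule.eq_bot_iff]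
  rintro ⟨x0, U⟩ hz
  rw [LinearMap.mem_ker] at hz
  have hU : U = 0 := by funext km; exact congrFun hz (Sum.inl km)
  subst hU
  have hx0 : (obsMat A C L).mulVec x0 = 0 := by
    funext kp
    have h5 : trajOut A B C D L x0 (0 : Fin L × Fin m → ℝ) kp = 0 := congrFun hz (Sum.inr kp)
    unfold trajOut at h5
    rw [stSeq_zero_input A B x0 _ (fun i => by unfold extFin; split <;> rfl)] at h5
    rw [Pi.add_apply] at h5
    have h7 : D.mulVec (fun a => (0 : Fin L × Fin m → ℝ) (kp.1, a)) kp.2 = 0 := by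
      have he : (fun a => (0 : Fin L × Fin m → ℝ) (kp.1, a)) = (0 : Fin m → ℝ) := rfl
      rw [he, Matrix.mulVec_zero]
      rfl
    rw [h7, add_zero] at h5
    have h8 : (obsMat A C L).mulVec x0 kp = C.mulVec ((A ^ (kp.1 : ℕ)).mulVec x0) kp.2 := by
      rw [Matrix.mulVec_mulVec]
      rfl
    rw [h8]
    exact h5
  have hmem : x0 ∈ LinearMap.ker (obsMat A C L).mulVecLin := by
    rw [LinearMap.mem_ker, Matrix.mulVecLin_apply]
    exact hx0
  rw [hker, Submodule.mem_bot] at hmem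
  subst hmem
  rfl

theorem span_eq_behavior_iff_rank' {n m p N L : ℕ}
    (A : Matrix (Fin n) (Fin n) ℝ) (B : Matrix (Fin n) (Fin m) ℝ)
    (C : Matrix (Fin p) (Fin n) ℝ) (D : Matrix (Fin p) (Fin m) ℝ)
    (hL : 1 ≤ L) (hLN : L ≤ N)
    (hobs : (obsMat A C L).rank = n)
    (ud : Fin N → Fin m → ℝ) (yd : Fin N → Fin p → ℝ)
    (Hu : Matrix (Fin L × Fin m) (Fin (N - L + 1)) ℝ)
    (Hy : Matrix (Fin L × Fin p) (Fin (N - L + 1)) ℝ)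
    (hHu : ∀ k a j, Hu (k, a) j = ud ⟨k.val + j.val, by omega⟩ a)
    (hHy : ∀ k a j, Hy (k, a) j = yd ⟨k.val + j.val, by omega⟩ a)
    (hdata : IsTrajectory A B C D N ud yd) :
    (∀ (su : Fin L × Fin m → ℝ) (sy : Fin L × Fin p → ℝ),
        (∃ g : Fin (N - L + 1) → ℝ,
          Hu.mulVec g = su ∧ Hy.mulVec g = sy) ↔
        IsTrajectory A B C D L (fun k a => su (k, a)) (fun k a => sy (k, a))) ↔
      (fromRows Hu Hy).rank = m * L + n := by
  set R := LinearMap.range (trajMap A B C D L) with hR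
  have hfinR : Module.finrank ℝ R = m * L + n := by
    rw [hR, LinearMap.finrank_range_of_inj (trajMap_inj A B C D hobs)]
    rw [Module.finrank_prod]
    simp [Nat.add_comm, Nat.mul_comm]
  have hcol : ∀ j : Fin (N - L + 1), (fun r => fromRows Hu Hy r j) ∈ R := by
    intro j
    rw [hR, mem_range_trajMap]
    obtain ⟨xd, hxd⟩ := hdata
    refine ⟨fun i => xd ⟨i.val + j.val, by omega⟩, fun k => ?_⟩
    have pf : k.val + j.val < N := by omega
    have h := hxd ⟨k.val + j.val, pf⟩
    constructor
    · show xd ⟨k.val + 1 + j.val, by omega⟩ = _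
      have e1 : (⟨k.val + 1 + j.val, by omega⟩ : Fin (N + 1))
          = (⟨k.val + j.val, pf⟩ : Fin N).succ := by
        apply Fin.ext
        simp
        omega
      rw [e1, h.1]
      have e2 : (fun (k : Fin L) (a : Fin m) => fromRows Hu Hy (Sum.inl (k, a)) j) k
          = ud ⟨k.val + j.val, pf⟩ := by
        funext a
        show Hu (k, a) j = _
        rw [hHu]
      rw [e2]
      rfl
    · show (fun a => fromRows Hu Hy (Sum.inr (k, a)) j) = _
      have e2 : (fun a => fromRows Hu Hy (Sum.inr (k, a)) j) = yd ⟨k.val + j.val, pf⟩ := by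
        funext a
        show Hy (k, a) j = _
        rw [hHy]
      rw [e2, h.2]
      have e3 : (fun (k : Fin L) (a : Fin m) => fromRows Hu Hy (Sum.inl (k, a)) j) k
          = ud ⟨k.val + j.val, pf⟩ := by
        funext a
        show Hu (k, a) j = _
        rw [hHu]
      rw [e3]
      rfl
  have hle : LinearMap.range (fromRows Hu Hy).mulVecLin ≤ R := by
    rintro w ⟨g, rfl⟩
    have hw : (fromRows Hu Hy).mulVecLin g = ∑ j, g j • (fun r => fromRows Hu Hy r j) := by
      funext r
      simp [Matrix.mulVecLin_apply, Matrix.mulVec, dotProduct, Finset.sum_apply, mul_comm]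
    rw [hw]
    exact Submodule.sum_mem _ fun j _ => Submodule.smul_mem _ _ (hcol j)
  constructor
  · intro hiff
    have heq : LinearMap.range (fromRows Hu Hy).mulVecLin = R := by
      apply le_antisymm hle
      intro w hw
      rw [hR, mem_range_trajMap] at hw
      obtain ⟨g, h1, h2⟩ := (hiff (fun km => w (Sum.inl km)) (fun kp => w (Sum.inr kp))).mpr hw
      refine ⟨g, ?_⟩
      funext r
      rw [Matrix.mulVecLin_apply, Matrix.fromRows_mulVec]
      cases r with
      | inl r => exact congrFun h1 r
      | inr r => exact congrFun h2 r
    show Module.finrank ℝ (LinearMap.range (fromRows Hu Hy).mulVecLin) = m * L + n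
    rw [heq, hfinR]
  · intro hrank
    have heq : LinearMap.range (fromRows Hu Hy).mulVecLin = R := by
      apply Submodule.eq_of_le_of_finrank_eq hle
      rw [hfinR]
      exact hrank
    intro su sy
    constructor
    · rintro ⟨g, h1, h2⟩
      have hw : Sum.elim su sy ∈ R := by
        rw [← heq]
        refine ⟨g, ?_⟩
        funext r
        rw [Matrix.mulVecLin_apply, Matrix.fromRows_mulVec]
        cases r with
        | inl r => exact congrFun h1 r
        | inr r => exact congrFun h2 r
      rw [hR, mem_range_trajMap] at hw
      exact hw
    · intro h
      have hw : Sum.elim su sy ∈ R := by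
        rw [hR, mem_range_trajMap]
        exact h
      rw [← heq] at hw
      obtain ⟨g, hg⟩ := hw
      refine ⟨g, ?_, ?_⟩
      · funext km
        have h9 := congrFun hg (Sum.inl km)
        rw [Matrix.mulVecLin_apply, Matrix.fromRows_mulVec] at h9
        exact h9
      · funext kp
        have h9 := congrFun hg (Sum.inr kp)
        rw [Matrix.mulVecLin_apply, Matrix.fromRows_mulVec] at h9
        exact h9

/-- **Data-driven representability via a rank condition.** Let `(u^d, y^d)` be a
length-`N` trajectory of `(A, B, C, D)` with `1 ≤ L ≤ N`, and assume the depth-`L`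
observability matrix has rank `n`. Then the column span of the stacked Hankel matrix
`[𝓗_L(u^d); 𝓗_L(y^d)]` equals the finite-horizon behavior `𝔅|_L` if and only if
`rank [𝓗_L(u^d); 𝓗_L(y^d)] = m L + n`. -/
theorem span_eq_behavior_iff_rank {n m p N L : ℕ}
    (A : Matrix (Fin n) (Fin n) ℝ) (B : Matrix (Fin n) (Fin m) ℝ)
    (C : Matrix (Fin p) (Fin n) ℝ) (D : Matrix (Fin p) (Fin m) ℝ)
    (hL : 1 ≤ L) (hLN : L ≤ N)
    (hobs : (obsMat A C L).rank = n)
    (ud : Fin N → Fin m → ℝ) (yd : Fin N → Fin p → ℝ)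
    (hdata : IsTrajectory A B C D N ud yd) :
    (∀ (su : Fin L × Fin m → ℝ) (sy : Fin L × Fin p → ℝ),
        (∃ g : Fin (N - L + 1) → ℝ,
          (blockHankel L hLN ud).mulVec g = su ∧ (blockHankel L hLN yd).mulVec g = sy) ↔
        IsTrajectory A B C D L (fun k a => su (k, a)) (fun k a => sy (k, a))) ↔
      (fromRows (blockHankel L hLN ud) (blockHankel L hLN yd)).rank = m * L + n := by
  exact span_eq_behavior_iff_rank' A B C D hL hLN hobs ud yd
    (blockHankel L hLN ud) (blockHankel L hLN yd)
    (fun k a j => rfl) (fun k a j => rfl) hdata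
end
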